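/- Under the tie-breaking assumption, the LOOCV mean-square-error score of k-NN regression equals the training mean square error of (k+1)-NN regression scaled by ((k+1)/k)²: (1/n) Σ_{ℓ=1}^n ‖f̂_{k, D_n \ {(x_ℓ,y_ℓ)}}(x_ℓ) − y_ℓ‖² = ((k+1)/k)² · (1/n) Σ_{ℓ=1}^n ‖f̂_{k+1, D_n}(x_ℓ) − y_ℓ‖². -/

import Mathlib

/-- `T` is a set of indices of `m` nearest neighbours of `x*` among the points
`p i`, `i ∈ S`. -/
def IsNNIdx {X ι : Type*} [MetricSpace X] [DecidableEq ι] (p : ι → X) (x : X)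
    (m : ℕ) (S T : Finset ι) : Prop :=
  T ⊆ S ∧ T.card = m ∧ ∀ t ∈ T, ∀ s ∈ S \ T, dist x (p t) < dist x (p s)

lemma nn_unique {X ι : Type*} [MetricSpace X] [DecidableEq ι] {p : ι → X} {x : X}
    {m : ℕ} {S T1 T2 : Finset ι}
    (h1 : IsNNIdx p x m S T1) (h2 : IsNNIdx p x m S T2) : T1 = T2 := by
  by_contra hne
  have hc : T1.card = T2.card := h1.2.1.trans h2.2.1.symm
  have h12 : (T1 \ T2).Nonempty := by
    rw [Finset.sdiff_nonempty]
    intro hsub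
    exact hne (Finset.eq_of_subset_of_card_le hsub hc.ge)
  have h21 : (T2 \ T1).Nonempty := by
    rw [Finset.sdiff_nonempty]
    intro hsub
    exact hne (Finset.eq_of_subset_of_card_le hsub hc.le).symm
  obtain ⟨a, ha⟩ := h12
  obtain ⟨b, hb⟩ := h21
  rw [Finset.mem_sdiff] at ha hb
  have d1 : dist x (p a) < dist x (p b) :=
    h1.2.2 a ha.1 b (Finset.mem_sdiff.mpr ⟨h2.1 hb.1, hb.2⟩)
  have d2 : dist x (p b) < dist x (p a) :=
    h2.2.2 b hb.1 a (Finset.mem_sdiff.mpr ⟨h1.1 ha.1, ha.2⟩)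
  linarith

/-- under the tie-breaking assumption, the LOOCV mean-square-error
score of `k`-NN regression equals the training MSE of `(k+1)`-NN regression
scaled by `((k+1)/k)²`. -/
theorem stmt4 {X : Type*} [MetricSpace X] (n M : ℕ) (hn : 1 ≤ n)
    (x : Fin n → X) (y : Fin n → EuclideanSpace ℝ (Fin M))
    (hdist : Function.Injective x)
    (htie : ∀ ℓ : Fin n, Function.Injective (fun i : Fin n => dist (x ℓ) (x i)))
    (k : ℕ) (hk : 1 ≤ k) (hkn : k + 1 ≤ n)
    (T T' : Fin n → Finset (Fin n))
    (hT : ∀ ℓ, IsNNIdx x (x ℓ) k (Finset.univ.erase ℓ) (T ℓ))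
    (hT' : ∀ ℓ, IsNNIdx x (x ℓ) (k + 1) Finset.univ (T' ℓ)) :
    (1 / (n : ℝ)) * ∑ ℓ, ‖(1 / (k : ℝ)) • ∑ i ∈ T ℓ, y i - y ℓ‖ ^ 2 =
      (((k : ℝ) + 1) / k) ^ 2 *
        ((1 / (n : ℝ)) *
          ∑ ℓ, ‖(1 / ((k : ℝ) + 1)) • ∑ i ∈ T' ℓ, y i - y ℓ‖ ^ 2) := by
  have hk0 : (0:ℝ) < (k:ℝ) := by exact_mod_cast hk
  have hk1 : (0:ℝ) < (k:ℝ) + 1 := by linarith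
  have hnotmem : ∀ ℓ, ℓ ∉ T ℓ := by
    intro ℓ h
    have := (hT ℓ).1 h
    simp at this
  have key : ∀ ℓ, T' ℓ = insert ℓ (T ℓ) := by
    intro ℓ
    have hmem : ℓ ∈ T' ℓ := by
      by_contra h
      obtain ⟨t, ht⟩ : (T' ℓ).Nonempty := Finset.card_pos.mp (by rw [(hT' ℓ).2.1]; omega)
      have h2 := (hT' ℓ).2.2 t ht ℓ (Finset.mem_sdiff.mpr ⟨Finset.mem_univ _, h⟩)
      rw [dist_self] at h2
      exact absurd h2 (not_lt.mpr dist_nonneg)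
    have herase : IsNNIdx x (x ℓ) k (Finset.univ.erase ℓ) ((T' ℓ).erase ℓ) := by
      refine ⟨?_, ?_, ?_⟩
      · intro t ht
        rw [Finset.mem_erase] at ht ⊢
        exact ⟨ht.1, Finset.mem_univ _⟩
      · rw [Finset.card_erase_of_mem hmem, (hT' ℓ).2.1] ; omega
      · intro t ht s hs
        rw [Finset.mem_sdiff, Finset.mem_erase, Finset.mem_erase] at hs
        refine (hT' ℓ).2.2 t (Finset.mem_of_mem_erase ht) s
          (Finset.mem_sdiff.mpr ⟨Finset.mem_univ _, fun hsT => hs.2 ⟨hs.1.1, hsT⟩⟩)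
    have hTe : T ℓ = (T' ℓ).erase ℓ := nn_unique (hT ℓ) herase
    rw [hTe, Finset.insert_erase hmem]
  have hterm : ∀ ℓ : Fin n,
      ‖(1 / (k : ℝ)) • ∑ i ∈ T ℓ, y i - y ℓ‖ ^ 2 =
        (((k : ℝ) + 1) / k) ^ 2 * ‖(1 / ((k : ℝ) + 1)) • ∑ i ∈ T' ℓ, y i - y ℓ‖ ^ 2 := by
    intro ℓ
    rw [key ℓ, Finset.sum_insert (hnotmem ℓ)]
    have hv : (1 / ((k : ℝ) + 1)) • (y ℓ + ∑ i ∈ T ℓ, y i) - y ℓ =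
        ((k : ℝ) / ((k : ℝ) + 1)) • ((1 / (k : ℝ)) • ∑ i ∈ T ℓ, y i - y ℓ) := by
      match_scalars <;> field_simp <;> ring
    rw [hv, norm_smul, Real.norm_eq_abs, abs_of_pos (by positivity), mul_pow,
      ← mul_assoc, ← mul_pow]
    field_simp
  rw [Finset.sum_congr rfl (fun ℓ _ => hterm ℓ), Finset.mul_sum, Finset.mul_sum,
    Finset.mul_sum]
  apply Finset.sum_congr rfl
  intro ℓ _
  ring
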